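/- Sorting minimizes product likelihood alignment: let c, c' : Fin k → ℕ be two count vectors with c monotone nondecreasing. Among all permutations π of Fin k, the sum −∑ₐ (c(a) + c'(π⁻¹(a))) · log((c(a) + c'(π⁻¹(a)))/N) (with N = ∑ c + ∑ c') is minimized by any π for which c' ∘ π⁻¹ is monotone nondecreasing. -/

import Mathlib

/-!
For a fixed total `N`, the merged negative log-likelihood equals `N log N - ∑ₐ h (c a + d a)`
with `h n = n log n`, so sorting must maximize `∑ₐ h (c a + d (τ a))` over permutations `τ`.
Writing `h (c + d) = h c + ∑_{t < d} (h (c + t + 1) - h (c + t))` splits this sum into layers: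
layer `t` pairs the indicator of `{a | t < d a}` with the increments of `h` at `c a + t`, which
are monotone in `c a` because `h` is convex. The rearrangement inequality then applies layer by
layer.
-/

open Finset

theorem ConvexOn.monotone_natCast_increment {f : ℝ → ℝ} (hf : ConvexOn ℝ (Set.Ici 0) f) :
    Monotone fun n : ℕ => f ((n + 1 : ℕ) : ℝ) - f n := by
  refine monotone_nat_of_le_succ fun n => ?_
  have hmid := hf.2 (Set.mem_Ici.2 n.cast_nonneg) (Set.mem_Ici.2 (by positivity : (0 : ℝ) ≤ n + 2))
    (by norm_num : (0 : ℝ) ≤ 1 / 2) (by norm_num : (0 : ℝ) ≤ 1 / 2) (by norm_num)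
  have hx : (1 / 2 : ℝ) • (n : ℝ) + (1 / 2 : ℝ) • ((n : ℝ) + 2) = n + 1 := by
    simp only [smul_eq_mul]; ring
  rw [hx, smul_eq_mul, smul_eq_mul] at hmid
  push_cast
  rw [show (n : ℝ) + 1 + 1 = n + 2 by ring]
  linarith

theorem apply_add_eq_apply_add_sum_range_ite (f : ℕ → ℝ) (a : ℕ) {m T : ℕ} (hm : m ≤ T) :
    f (a + m) = f a + ∑ t ∈ range T, (if t < m then 1 else 0) * (f (a + t + 1) - f (a + t)) := by
  simp only [ite_mul, one_mul, zero_mul, ← sum_filter]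
  have htelescope := sum_range_sub (fun t => f (a + t)) m
  simp only [← add_assoc] at htelescope
  rw [show (range T).filter (· < m) = range m by ext t; simp; omega, htelescope, add_zero,
    add_sub_cancel]

theorem Monovary.sum_apply_add_comp_perm_le {ι : Type*} [Fintype ι] {f : ℕ → ℝ}
    (hf : Monotone fun n => f (n + 1) - f n) {c d : ι → ℕ} (hcd : Monovary c d)
    (τ : Equiv.Perm ι) :
    ∑ i, f (c i + d (τ i)) ≤ ∑ i, f (c i + d i) := by
  set T := ∑ i, d i
  have hdT : ∀ i, d i ≤ T := fun i => single_le_sum (fun j _ => Nat.zero_le (d j)) (mem_univ i)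
  have layers : ∀ e : ι → ℕ, (∀ i, e i ≤ T) → ∑ i, f (c i + e i) = ∑ i, f (c i) +
      ∑ t ∈ range T, ∑ i, (if t < e i then 1 else 0) * (f (c i + t + 1) - f (c i + t)) := by
    intro e he
    rw [sum_comm, ← sum_add_distrib]
    exact sum_congr rfl fun i _ => apply_add_eq_apply_add_sum_range_ite f (c i) (he i)
  rw [layers _ fun i => hdT (τ i), layers d hdT]
  refine add_le_add le_rfl (sum_le_sum fun t _ => ?_)
  have hmv : Monovary (fun i => f (c i + t + 1) - f (c i + t))
      fun i => if t < d i then (1 : ℝ) else 0 := by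
    intro i j hij
    have hdij : d i < d j := by
      dsimp only at hij
      split_ifs at hij <;> norm_num at hij
      omega
    simpa only [add_right_comm _ t 1] using hf (Nat.add_le_add_right (hcd hdij) t)
  simpa only [mul_comm] using hmv.sum_mul_comp_perm_le_sum_mul (σ := τ)

theorem sum_mul_log_div_sum {ι : Type*} [Fintype ι] {x : ι → ℝ} (hx : ∀ i, 0 ≤ x i) :
    ∑ i, x i * Real.log (x i / ∑ j, x j) =
      ∑ i, x i * Real.log (x i) - (∑ i, x i) * Real.log (∑ i, x i) := by
  rw [sum_mul, ← sum_sub_distrib]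
  refine sum_congr rfl fun i _ => ?_
  rcases (hx i).eq_or_lt with hxi | hxi
  · simp [← hxi]
  · have hsum : 0 < ∑ j, x j := hxi.trans_le (single_le_sum (fun j _ => hx j) (mem_univ i))
    rw [Real.log_div hxi.ne' hsum.ne', mul_sub]

theorem sum_add_comp_perm_mul_log_div_eq {k : ℕ} (c c' : Fin k → ℕ) (ρ : Equiv.Perm (Fin k)) :
    ∑ a, ((c a : ℝ) + (c' (ρ.symm a) : ℝ)) *
        Real.log (((c a : ℝ) + (c' (ρ.symm a) : ℝ)) / ((∑ a, (c a : ℝ)) + ∑ a, (c' a : ℝ))) =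
      ∑ a, (((c a + c' (ρ.symm a) : ℕ) : ℝ) * Real.log (c a + c' (ρ.symm a) : ℕ)) -
        ((∑ a, (c a : ℝ)) + ∑ a, (c' a : ℝ)) * Real.log ((∑ a, (c a : ℝ)) + ∑ a, (c' a : ℝ)) := by
  have htotal : (∑ a, (c a : ℝ)) + ∑ a, (c' a : ℝ) = ∑ a, ((c a : ℝ) + (c' (ρ.symm a) : ℝ)) := by
    rw [sum_add_distrib, Equiv.sum_comp ρ.symm (fun a => (c' a : ℝ))]
  push_cast
  rw [htotal, sum_mul_log_div_sum fun a => by positivity]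

theorem sorting_minimizes_merged_nll (k : ℕ) (c c' : Fin k → ℕ)
    (hc : Monotone c) (π : Equiv.Perm (Fin k))
    (hπ : Monotone (fun a => c' (π.symm a))) (σ : Equiv.Perm (Fin k)) :
    (-∑ a, ((c a : ℝ) + (c' (π.symm a) : ℝ)) *
        Real.log (((c a : ℝ) + (c' (π.symm a) : ℝ)) /
          ((∑ a, (c a : ℝ)) + ∑ a, (c' a : ℝ)))) ≤
    -∑ a, ((c a : ℝ) + (c' (σ.symm a) : ℝ)) *
        Real.log (((c a : ℝ) + (c' (σ.symm a) : ℝ)) /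
          ((∑ a, (c a : ℝ)) + ∑ a, (c' a : ℝ))) := by
  have hrearrange : ∑ a, (((c a + c' (σ.symm a) : ℕ) : ℝ) * Real.log (c a + c' (σ.symm a) : ℕ)) ≤
      ∑ a, (((c a + c' (π.symm a) : ℕ) : ℝ) * Real.log (c a + c' (π.symm a) : ℕ)) := by
    simpa using (hc.monovary hπ).sum_apply_add_comp_perm_le (f := fun n : ℕ => (n : ℝ) * Real.log n)
      (ConvexOn.monotone_natCast_increment Real.strictConvexOn_mul_log.convexOn) (σ.symm.trans π)
  rw [sum_add_comp_perm_mul_log_div_eq c c' π, sum_add_comp_perm_mul_log_div_eq c c' σ]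
  linarith
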